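/- Let q ≥ 2 be an integer, let m, n, k, w be integers with 0 ≤ k ≤ n ≤ m and (n−k)/2 < w ≤ n, and set ξ := w − (n−k)/2. Define, for an integer δ with 2ξ ≤ δ ≤ n − k, Ā_w := q^{m(k−n)} · ∏_{i=0}^{w−1} (q^m − q^i)(q^n − q^i)/(q^w − q^i) and P(δ) := (Σ_{i=⌈w − (n−k)/2 + δ/2⌉}^{min{δ, w}} [n−w, δ−i]_q · [w, i]_q · q^{(w−i)(δ−i)}) / [n, δ]_q. Then for every integer δ with 2ξ ≤ δ ≤ n − k, Ā_w · P(δ) ≤ 64 n · q^{−( m(n−k) − w(n+m) + w^2 + min{ 2ξ((n+k)/2 − ξ), w·k } )}. -/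

import Mathlib

/-!
Each factor `(q^{a-i} - 1)/(q^{b-i} - 1)` of `[a, b]_q` lies between `q^{a-b}` and
`q^{a-b} / (1 - q^{-(b-i)})`, and `∏_{j≥1} (1 - q^{-j}) ≥ ∏_{j≥1} (1 - 2^{-j}) > 9/32`, so
`q^{b(a-b)} ≤ [a, b]_q ≤ (32/9) q^{b(a-b)}`; in the same way `Ā_w ≤ (32/9) q^{m(k-n) + (m+n-w)w}`.
The `i`-th summand of `P(δ)` is then at most `(32/9)^2 q^{δ(n-δ) - i(n-δ-w+i)}`, the exponent
decreases in `i` on the range of summation, and there are at most `n` summands, so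
`P(δ) ≤ n (32/9)^2 q^{-i₀(n-δ-w+i₀)}` with `i₀` the lower summation limit. Finally
`i₀ (n-δ-w+i₀) ≥ (ξ + δ/2)((n+k)/2 - δ/2)`, a concave function of `δ` on `[2ξ, n-k]` whose values
at the endpoints are `2ξ((n+k)/2 - ξ)` and `wk`.
-/

/-- The Gaussian binomial coefficient `[a, b]_q`, defined as
`∏_{i=0}^{b-1} (q^{a-i} - 1)/(q^{b-i} - 1)` for `0 ≤ b ≤ a`, and `0` otherwise. -/
noncomputable def gaussBinom (q : ℚ) (a b : ℤ) : ℚ :=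
  if 0 ≤ b ∧ b ≤ a then
    ∏ i ∈ Finset.range b.toNat, (q ^ (a - i).toNat - 1) / (q ^ (b - i).toNat - 1)
  else 0

open Finset

section ProductBounds

variable {K : Type*} [Field K] [LinearOrder K] [IsStrictOrderedRing K]

theorem nine_div_thirty_two_le_prod_one_sub_pow {x : K} (hx0 : 0 ≤ x) (hx : x ≤ 1 / 2) (b : ℕ) :
    9 / 32 ≤ ∏ j ∈ range b, (1 - x ^ (j + 1)) := by
  have hx1 : x ≤ 1 := by linarith
  -- The invariant propagates once `x ^ b ≤ 1/4`, hence from `b = 2` on; at `x = 1/2` the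
  -- product tends to `0.2887…`, so `9/32` leaves little room.
  have key : ∀ b, 9 / 32 + 3 / 8 * x ^ (b + 2) ≤ ∏ j ∈ range (b + 2), (1 - x ^ (j + 1)) := by
    intro b
    induction b with
    | zero =>
      simp only [prod_range_succ, prod_range_zero]
      nlinarith [mul_nonneg hx0 hx0, mul_nonneg (mul_nonneg hx0 hx0) (sub_nonneg.2 hx)]
    | succ b ih =>
      rw [show b + 1 + 2 = b + 2 + 1 by ring, prod_range_succ, pow_succ]
      set t := x ^ (b + 2)
      have ht : t ≤ 1 / 4 := by
        calc t ≤ x ^ 2 := pow_le_pow_of_le_one hx0 hx1 (by omega)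
          _ ≤ (1 / 2) ^ 2 := pow_le_pow_left₀ hx0 hx 2
          _ = 1 / 4 := by norm_num
      have ht0 : 0 ≤ t := pow_nonneg hx0 _
      have hf : 0 ≤ 1 - t * x := by nlinarith
      nlinarith [mul_le_mul_of_nonneg_right ih hf, mul_nonneg ht0 (sub_nonneg.2 hx),
        mul_nonneg (mul_nonneg ht0 hx0) (sub_nonneg.2 ht)]
  match b with
  | 0 => norm_num
  | 1 => norm_num; linarith
  | b + 2 => linarith [key b, pow_nonneg hx0 (b + 2)]

theorem nine_div_thirty_two_le_prod_one_sub_inv_pow {q : K} (hq : 2 ≤ q) (b : ℕ) :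
    9 / 32 ≤ ∏ i ∈ range b, (1 - (q ^ (b - i))⁻¹) := by
  have hx : q⁻¹ ≤ 1 / 2 := by rw [one_div]; exact inv_anti₀ two_pos hq
  calc (9 / 32 : K) ≤ ∏ j ∈ range b, (1 - q⁻¹ ^ (j + 1)) :=
        nine_div_thirty_two_le_prod_one_sub_pow (by positivity) hx b
    _ = ∏ i ∈ range b, (1 - (q ^ (b - i))⁻¹) := by
        rw [← prod_range_reflect]
        refine prod_congr rfl fun i hi => ?_
        rw [inv_pow, show b - 1 - i + 1 = b - i by have := mem_range.1 hi; omega]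

theorem prod_le_of_mul_one_sub_inv_pow_le {q c : K} {f : ℕ → K} (hq : 2 ≤ q) {b : ℕ}
    (hf0 : ∀ i ∈ range b, 0 ≤ f i) (hf : ∀ i ∈ range b, f i * (1 - (q ^ (b - i))⁻¹) ≤ c) :
    ∏ i ∈ range b, f i ≤ 32 / 9 * c ^ b := by
  have hprod : (∏ i ∈ range b, f i) * ∏ i ∈ range b, (1 - (q ^ (b - i))⁻¹) ≤ c ^ b := by
    rw [← prod_mul_distrib, ← card_range b, ← prod_const, card_range]
    refine prod_le_prod (fun i hi => mul_nonneg (hf0 i hi) (sub_nonneg.2 ?_)) hf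
    exact inv_le_one_of_one_le₀ (one_le_pow₀ (by linarith))
  have := nine_div_thirty_two_le_prod_one_sub_inv_pow hq b
  nlinarith [prod_nonneg hf0]

theorem prod_pow_sub_pow_mul_div_le {q : K} (hq : 2 ≤ q) {m n w : ℕ} (hwn : w ≤ n)
    (hnm : n ≤ m) :
    ∏ i ∈ range w, (q ^ m - q ^ i) * (q ^ n - q ^ i) / (q ^ w - q ^ i)
      ≤ 32 / 9 * q ^ (((m : ℤ) + n - w) * w) := by
  have hq0 : 0 < q := by linarith
  have hq1 : 1 ≤ q := by linarith
  rw [zpow_mul, zpow_natCast]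
  refine prod_le_of_mul_one_sub_inv_pow_le hq (fun i hi => ?_) (fun i hi => ?_)
  all_goals
    have hi := mem_range.1 hi
    have him : q ^ i ≤ q ^ m := pow_le_pow_right₀ hq1 (by omega)
    have hin : q ^ i ≤ q ^ n := pow_le_pow_right₀ hq1 (by omega)
    have hiw : q ^ i < q ^ w := pow_lt_pow_right₀ (by linarith) hi
    have hi0 : 0 < q ^ i := by positivity
  · exact div_nonneg (by nlinarith) (by linarith)
  · have hsplit : q ^ i * q ^ (w - i) = q ^ w := by rw [← pow_add]; congr 1; omega
    have hw0 : (0 : K) < q ^ w := by positivity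
    calc (q ^ m - q ^ i) * (q ^ n - q ^ i) / (q ^ w - q ^ i) * (1 - (q ^ (w - i))⁻¹)
        = (q ^ m - q ^ i) * (q ^ n - q ^ i) / q ^ w := by
          have h1 : 1 < q ^ (w - i) := one_lt_pow₀ (by linarith) (by omega)
          rw [← hsplit]
          field_simp [(sub_pos.2 h1).ne']
      _ ≤ q ^ m * q ^ n / q ^ w := div_le_div_of_nonneg_right (by nlinarith) hw0.le
      _ = q ^ ((m : ℤ) + n - w) := by
          rw [zpow_sub₀ hq0.ne', zpow_add₀ hq0.ne', zpow_natCast, zpow_natCast, zpow_natCast]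

end ProductBounds

section GaussianBinomial

variable {q : ℚ}

theorem gaussBinom_natCast {a b : ℕ} (h : b ≤ a) :
    gaussBinom q a b = ∏ i ∈ range b, (q ^ (a - i) - 1) / (q ^ (b - i) - 1) := by
  rw [gaussBinom, if_pos ⟨Int.natCast_nonneg b, Int.ofNat_le.2 h⟩]
  simp only [Int.toNat_natCast, Int.toNat_sub]

theorem gaussBinom_nonneg (hq : 1 ≤ q) (a b : ℤ) : 0 ≤ gaussBinom q a b := by
  rw [gaussBinom]
  split_ifs
  · exact prod_nonneg fun i _ =>
      div_nonneg (sub_nonneg.2 (one_le_pow₀ hq)) (sub_nonneg.2 (one_le_pow₀ hq))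
  · exact le_rfl

theorem zpow_le_gaussBinom (hq : 1 < q) {a b : ℤ} (hb : 0 ≤ b) (hba : b ≤ a) :
    q ^ (b * (a - b)) ≤ gaussBinom q a b := by
  lift b to ℕ using hb
  lift a to ℕ using (Int.natCast_nonneg b).trans hba
  have hba : b ≤ a := by exact_mod_cast hba
  rw [gaussBinom_natCast hba, ← Nat.cast_sub hba, ← Nat.cast_mul, zpow_natCast, mul_comm,
    pow_mul, ← card_range b, ← prod_const, card_range]
  refine prod_le_prod (fun _ _ => by positivity) fun i hi => ?_
  have hi := mem_range.1 hi
  have h1 : 1 < q ^ (b - i) := one_lt_pow₀ hq (by omega)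
  rw [le_div_iff₀ (by linarith), mul_sub_one, ← pow_add, show a - b + (b - i) = a - i by omega]
  linarith [one_le_pow₀ (M₀ := ℚ) (n := a - b) hq.le]

theorem gaussBinom_le_zpow (hq : 2 ≤ q) (a b : ℤ) :
    gaussBinom q a b ≤ 32 / 9 * q ^ (b * (a - b)) := by
  have hq0 : 0 < q := by linarith
  by_cases h : 0 ≤ b ∧ b ≤ a
  swap
  · rw [gaussBinom, if_neg h]
    positivity
  obtain ⟨hb, hba⟩ := h
  lift b to ℕ using hb
  lift a to ℕ using (Int.natCast_nonneg b).trans hba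
  have hba : b ≤ a := by exact_mod_cast hba
  rw [gaussBinom_natCast hba, ← Nat.cast_sub hba, mul_comm (b : ℤ), zpow_mul, zpow_natCast,
    zpow_natCast]
  refine prod_le_of_mul_one_sub_inv_pow_le hq (fun i hi => ?_) (fun i hi => ?_)
  all_goals
    have hi := mem_range.1 hi
    have h1 : 1 < q ^ (b - i) := one_lt_pow₀ (by linarith) (by omega)
    have hsplit : q ^ (a - b) * q ^ (b - i) = q ^ (a - i) := by rw [← pow_add]; congr 1; omega
  · exact div_nonneg (by nlinarith [one_le_pow₀ (M₀ := ℚ) (n := a - b) (by linarith : 1 ≤ q)])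
      (by linarith)
  · calc (q ^ (a - i) - 1) / (q ^ (b - i) - 1) * (1 - (q ^ (b - i))⁻¹)
        = (q ^ (a - i) - 1) / q ^ (b - i) := by field_simp [(sub_pos.2 h1).ne']
      _ ≤ q ^ (a - i) / q ^ (b - i) := by gcongr; linarith
      _ = q ^ (a - b) := by rw [← hsplit]; field_simp

theorem gaussBinom_mul_gaussBinom_mul_zpow_le (hq : 2 ≤ q) (n w δ i : ℤ) :
    gaussBinom q (n - w) (δ - i) * gaussBinom q w i * q ^ ((w - i) * (δ - i))
      ≤ (32 / 9) ^ 2 * q ^ (δ * (n - δ) - i * (n - δ - w + i)) := by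
  have hq0 : 0 < q := by linarith
  calc gaussBinom q (n - w) (δ - i) * gaussBinom q w i * q ^ ((w - i) * (δ - i))
      ≤ 32 / 9 * q ^ ((δ - i) * (n - w - (δ - i))) * (32 / 9 * q ^ (i * (w - i)))
        * q ^ ((w - i) * (δ - i)) := by
        gcongr
        · exact gaussBinom_nonneg (by linarith) _ _
        · exact gaussBinom_le_zpow hq _ _
        · exact gaussBinom_le_zpow hq _ _
    _ = (32 / 9) ^ 2 * q ^ ((δ - i) * (n - w - (δ - i)) + i * (w - i) + (w - i) * (δ - i)) := by
        rw [zpow_add₀ hq0.ne', zpow_add₀ hq0.ne']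
        ring
    _ = (32 / 9) ^ 2 * q ^ (δ * (n - δ) - i * (n - δ - w + i)) := by ring_nf

theorem sum_gaussBinom_div_le (hq : 2 ≤ q) {n w δ : ℕ} {i₀ M : ℤ} (hi₀ : 0 < i₀) (hM : M ≤ n)
    (hδ : δ ≤ n) (hwδ : (w : ℤ) + δ ≤ n + 2 * i₀) :
    (∑ i ∈ Icc i₀ M, gaussBinom q ((n : ℤ) - w) ((δ : ℤ) - i) * gaussBinom q w i
        * q ^ (((w : ℤ) - i) * ((δ : ℤ) - i))) / gaussBinom q n δ
      ≤ n * (32 / 9) ^ 2 * q ^ (-(i₀ * ((n : ℤ) - δ - w + i₀))) := by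
  have hq0 : 0 < q := by linarith
  set d : ℤ := (δ : ℤ) * ((n : ℤ) - δ)
  set g₀ : ℤ := i₀ * ((n : ℤ) - δ - w + i₀)
  have hterm : ∀ i ∈ Icc i₀ M, gaussBinom q ((n : ℤ) - w) ((δ : ℤ) - i) * gaussBinom q w i
      * q ^ (((w : ℤ) - i) * ((δ : ℤ) - i)) ≤ (32 / 9) ^ 2 * q ^ (d - g₀) := fun i hi =>
    (gaussBinom_mul_gaussBinom_mul_zpow_le hq n w δ i).trans <| by
      gcongr (32 / 9) ^ 2 * ?_
      exact zpow_le_zpow_right₀ (by linarith) (by nlinarith [(mem_Icc.1 hi).1])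
  -- The sum has at most `n` terms: this is the factor `n` of the bound.
  have hcard : (#(Icc i₀ M) : ℚ) ≤ n := by
    rw [Int.card_Icc]
    exact_mod_cast (by omega : (M + 1 - i₀).toNat ≤ n)
  have hden : q ^ d ≤ gaussBinom q n δ :=
    zpow_le_gaussBinom (by linarith) (Int.natCast_nonneg δ) (by exact_mod_cast hδ)
  calc _ ≤ n * ((32 / 9) ^ 2 * q ^ (d - g₀)) / q ^ d :=
        div_le_div₀ (by positivity)
          ((sum_le_card_nsmul _ _ _ hterm).trans (by rw [nsmul_eq_mul]; gcongr))
          (by positivity) hden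
    _ = n * (32 / 9) ^ 2 * q ^ (-g₀) := by
        rw [zpow_sub₀ hq0.ne', zpow_neg]
        field_simp

end GaussianBinomial

theorem min_add_mul_sub_le_of_mem_Icc {a b x u v : ℝ} (hax : a ≤ x) (hxb : x ≤ b) :
    min ((a + u) * (v - a)) ((b + u) * (v - b)) ≤ (x + u) * (v - x) := by
  rcases le_total (x + a + u) v with h | h
  · exact (min_le_left _ _).trans (by nlinarith [mul_nonneg (sub_nonneg.2 hax) (sub_nonneg.2 h)])
  · exact (min_le_right _ _).trans (by nlinarith [mul_nonneg (sub_nonneg.2 hxb) (sub_nonneg.2 h)])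

theorem min_le_mul_add_of_le {n k w δ : ℕ} {y : ℝ} (hd1 : 2 * w + k ≤ δ + n) (hd2 : δ + k ≤ n)
    (hy : (w : ℝ) - ((n : ℝ) - k) / 2 + (δ : ℝ) / 2 ≤ y) :
    min (2 * ((w : ℝ) - ((n : ℝ) - k) / 2) * (((n : ℝ) + k) / 2 - ((w : ℝ) - ((n : ℝ) - k) / 2)))
      ((w : ℝ) * k) ≤ y * ((n : ℝ) - δ - w + y) := by
  have hd1 : 2 * (w : ℝ) + k ≤ δ + n := by exact_mod_cast hd1
  have hd2 : (δ : ℝ) + k ≤ n := by exact_mod_cast hd2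
  calc _ = min (((w : ℝ) - ((n : ℝ) - k) / 2 + ((w : ℝ) - ((n : ℝ) - k) / 2))
          * (((n : ℝ) + k) / 2 - ((w : ℝ) - ((n : ℝ) - k) / 2)))
        ((((n : ℝ) - k) / 2 + ((w : ℝ) - ((n : ℝ) - k) / 2))
          * (((n : ℝ) + k) / 2 - ((n : ℝ) - k) / 2)) := by
        congr 1 <;> ring
    _ ≤ ((δ : ℝ) / 2 + ((w : ℝ) - ((n : ℝ) - k) / 2)) * (((n : ℝ) + k) / 2 - (δ : ℝ) / 2) :=
        min_add_mul_sub_le_of_mem_Icc (by linarith) (by linarith)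
    _ ≤ y * ((n : ℝ) - δ - w + y) := by
        nlinarith [mul_nonneg (sub_nonneg.2 hy)
          (by linarith [Nat.cast_nonneg (α := ℝ) w, Nat.cast_nonneg (α := ℝ) k] :
            (0 : ℝ) ≤ y + ((w : ℝ) - ((n : ℝ) - k) / 2 + (δ : ℝ) / 2) + ((n : ℝ) - δ - w))]

theorem stmt12_general (q m n k w : ℕ) (hq : 2 ≤ q)
    (hn : n ≤ m) (hw1 : ((n : ℚ) - k) / 2 < w) (hw2 : w ≤ n) :
    ∀ δ : ℕ, 2 * w + k ≤ δ + n → δ + k ≤ n →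
    ((q : ℝ) ^ ((m : ℤ) * ((k : ℤ) - n)) * ∏ i ∈ Finset.range w,
        ((q : ℝ) ^ m - (q : ℝ) ^ i) * ((q : ℝ) ^ n - (q : ℝ) ^ i)
          / ((q : ℝ) ^ w - (q : ℝ) ^ i))
      * ((∑ i ∈ Finset.Icc (⌈(w : ℚ) - ((n : ℚ) - k) / 2 + (δ : ℚ) / 2⌉) ((min δ w : ℕ) : ℤ),
            ((gaussBinom q ((n : ℤ) - w) ((δ : ℤ) - i) : ℚ) : ℝ)
              * ((gaussBinom q w i : ℚ) : ℝ) * (q : ℝ) ^ (((w : ℤ) - i) * ((δ : ℤ) - i)))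
          / ((gaussBinom q n δ : ℚ) : ℝ))
      ≤ 64 * n * (q : ℝ) ^ (-((m : ℝ) * ((n : ℝ) - k) - w * ((n : ℝ) + m) + (w : ℝ) ^ 2
          + min (2 * ((w : ℝ) - ((n : ℝ) - k) / 2)
              * (((n : ℝ) + k) / 2 - ((w : ℝ) - ((n : ℝ) - k) / 2)))
            ((w : ℝ) * k))) := by
  intro δ hd1 hd2
  have hqR : (2 : ℝ) ≤ q := by exact_mod_cast hq
  set i₀ := ⌈(w : ℚ) - ((n : ℚ) - k) / 2 + (δ : ℚ) / 2⌉
  have hi₀ : (w : ℚ) - ((n : ℚ) - k) / 2 + (δ : ℚ) / 2 ≤ i₀ := Int.le_ceil _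
  have hi₀_pos : 0 < i₀ := Int.lt_ceil.2 (by push_cast; linarith [Nat.cast_nonneg (α := ℚ) δ])
  set P := (∑ i ∈ Finset.Icc i₀ ((min δ w : ℕ) : ℤ),
    ((gaussBinom q ((n : ℤ) - w) ((δ : ℤ) - i) : ℚ) : ℝ) * ((gaussBinom q w i : ℚ) : ℝ)
      * (q : ℝ) ^ (((w : ℤ) - i) * ((δ : ℤ) - i))) / ((gaussBinom q n δ : ℚ) : ℝ)
  have hP : P ≤ n * (32 / 9) ^ 2 * (q : ℝ) ^ (-(i₀ * ((n : ℤ) - δ - w + i₀))) := by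
    have hwδ : (((w + δ : ℤ)) : ℚ) ≤ (n + 2 * i₀ : ℤ) := by
      push_cast; linarith [Nat.cast_nonneg (α := ℚ) w, Nat.cast_nonneg (α := ℚ) k]
    have h := Rat.cast_le (K := ℝ) |>.2 <| sum_gaussBinom_div_le (q := q) (n := n) (w := w) (δ := δ)
      (M := ((min δ w : ℕ) : ℤ)) (by exact_mod_cast hq) hi₀_pos (by omega) (by omega)
      (Int.cast_le.1 hwδ)
    simpa only [Rat.cast_div, Rat.cast_sum, Rat.cast_mul, Rat.cast_zpow, Rat.cast_natCast,
      Rat.cast_ofNat, Rat.cast_pow] using h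
  have hP0 : 0 ≤ P := by
    have hG (a b : ℤ) : (0 : ℝ) ≤ (gaussBinom q a b : ℚ) :=
      Rat.cast_nonneg.2 (gaussBinom_nonneg (by exact_mod_cast hq.trans' one_le_two) a b)
    exact div_nonneg
      (sum_nonneg fun i _ => mul_nonneg (mul_nonneg (hG _ _) (hG _ _)) (by positivity)) (hG _ _)
  have hexp := min_le_mul_add_of_le (y := (i₀ : ℝ)) hd1 hd2 <| by
    simpa using (Rat.cast_le (K := ℝ)).2 hi₀
  have hq0 : (q : ℝ) ≠ 0 := by positivity
  calc _ ≤ (q : ℝ) ^ ((m : ℤ) * ((k : ℤ) - n)) * (32 / 9 * (q : ℝ) ^ (((m : ℤ) + n - w) * w))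
        * (n * (32 / 9) ^ 2 * (q : ℝ) ^ (-(i₀ * ((n : ℤ) - δ - w + i₀)))) :=
        mul_le_mul (mul_le_mul_of_nonneg_left (prod_pow_sub_pow_mul_div_le hqR hw2 hn)
          (by positivity)) hP hP0 (by positivity)
    _ = (32 / 9) ^ 3 * n * (q : ℝ) ^ ((m : ℤ) * ((k : ℤ) - n) + ((m : ℤ) + n - w) * w
          - i₀ * ((n : ℤ) - δ - w + i₀)) := by
        rw [zpow_sub₀ hq0, zpow_add₀ hq0, zpow_neg]
        ring
    _ ≤ _ := by
        gcongr ?_ * _ * ?_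
        · norm_num
        · rw [← Real.rpow_intCast]
          exact Real.rpow_le_rpow_of_exponent_le (by linarith) (by push_cast; linarith)

/-- With `ξ := w − (n−k)/2`,
`Ā_w = q^{m(k−n)} ∏_{i=0}^{w−1} (q^m − q^i)(q^n − q^i)/(q^w − q^i)` and
`P(δ) = (Σ_{i=⌈w−(n−k)/2+δ/2⌉}^{min{δ,w}} [n−w, δ−i]_q [w, i]_q q^{(w−i)(δ−i)}) / [n, δ]_q`,
for every integer `δ` with `2ξ ≤ δ ≤ n − k` one has
`Ā_w · P(δ) ≤ 64 n q^{−(m(n−k) − w(n+m) + w² + min{2ξ((n+k)/2 − ξ), wk})}`. -/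
theorem stmt12 (q m n k w : ℕ) (hq : 2 ≤ q)
    (hk : k ≤ n) (hn : n ≤ m) (hw1 : ((n : ℚ) - k) / 2 < w) (hw2 : w ≤ n) :
    ∀ δ : ℕ, 2 * w + k ≤ δ + n → δ + k ≤ n →
    ((q : ℝ) ^ ((m : ℤ) * ((k : ℤ) - n)) * ∏ i ∈ Finset.range w,
        ((q : ℝ) ^ m - (q : ℝ) ^ i) * ((q : ℝ) ^ n - (q : ℝ) ^ i)
          / ((q : ℝ) ^ w - (q : ℝ) ^ i))
      * ((∑ i ∈ Finset.Icc (⌈(w : ℚ) - ((n : ℚ) - k) / 2 + (δ : ℚ) / 2⌉) ((min δ w : ℕ) : ℤ),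
            ((gaussBinom q ((n : ℤ) - w) ((δ : ℤ) - i) : ℚ) : ℝ)
              * ((gaussBinom q w i : ℚ) : ℝ) * (q : ℝ) ^ (((w : ℤ) - i) * ((δ : ℤ) - i)))
          / ((gaussBinom q n δ : ℚ) : ℝ))
      ≤ 64 * n * (q : ℝ) ^ (-((m : ℝ) * ((n : ℝ) - k) - w * ((n : ℝ) + m) + (w : ℝ) ^ 2
          + min (2 * ((w : ℝ) - ((n : ℝ) - k) / 2)
              * (((n : ℝ) + k) / 2 - ((w : ℝ) - ((n : ℝ) - k) / 2)))
            ((w : ℝ) * k))) :=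
  stmt12_general q m n k w hq hn hw1 hw2
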